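/- arXiv:0711.4403 — 2 statements merged into one kernel-verified Lean document; each statement's English description precedes it below -/
import Mathlib

section
/- Let f ∈ C¹([0,1]) with f(0) = 0 and u = f′ ∈ L²(0,1). Then the regularized solutions u_α = (αI + A)⁻¹ f converge to u in L²(0,1) as α → 0⁺, where A is the Volterra operator. -/
/-!
Integrating by parts and using `f 0 = 0`, the regularized solution is
`u_α x = α⁻¹ ∫₀ˣ e^{(s - x)/α} f' s ds`, the convolution of `f'` with the rescaled one-sided
exponential kernel `α⁻¹ e^{-t/α} 1_{t ≥ 0}`. This kernel is a nonnegative approximate identity, so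
`u_α → f'` pointwise on `(0, 1)` with `|u_α| ≤ sup |f'|`, and dominated convergence gives
convergence in `L²`.
-/

open MeasureTheory intervalIntegral Real Filter
open Set Topology Bornology

theorem tendsto_eLpNorm_zero_of_dominated {α E ι : Type*} [MeasurableSpace α] {μ : Measure α}
    [IsFiniteMeasure μ] [NormedAddCommGroup E] {l : Filter ι} [l.IsCountablyGenerated]
    {F : ι → α → E} {C : ℝ} {p : ENNReal} (hp : p ≠ ⊤)
    (hF_meas : ∀ᶠ i in l, AEStronglyMeasurable (F i) μ)
    (h_bound : ∀ᶠ i in l, ∀ᵐ x ∂μ, ‖F i x‖ ≤ C)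
    (h_lim : ∀ᵐ x ∂μ, Tendsto (fun i ↦ F i x) l (𝓝 0)) :
    Tendsto (fun i ↦ eLpNorm (F i) p μ) l (𝓝 0) := by
  rcases eq_or_ne p 0 with rfl | hp0
  · simpa using tendsto_const_nhds
  have hp_pos : 0 < p.toReal := ENNReal.toReal_pos hp0 hp
  have h_lintegral : Tendsto (fun i ↦ ∫⁻ x, ‖F i x‖ₑ ^ p.toReal ∂μ) l (𝓝 0) := by
    simpa using tendsto_lintegral_filter_of_dominated_convergence' (μ := μ)
      (fun _ ↦ ENNReal.ofReal C ^ p.toReal) (f := fun _ ↦ 0)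
      (hF_meas.mono fun i hi ↦ hi.enorm.pow_const _)
      (h_bound.mono fun i hi ↦ hi.mono fun x hx ↦
        ENNReal.rpow_le_rpow (ofReal_norm (F i x) ▸ ENNReal.ofReal_le_ofReal hx) hp_pos.le)
      (by simp [lintegral_const, ENNReal.mul_eq_top, measure_ne_top])
      (h_lim.mono fun x hx ↦ by
        simpa [ENNReal.zero_rpow_of_pos hp_pos] using hx.enorm.ennrpow_const p.toReal)
  simpa [eLpNorm_eq_lintegral_rpow_enorm_toReal hp0 hp, ENNReal.zero_rpow_of_pos, hp_pos] using
    h_lintegral.ennrpow_const (1 / p.toReal)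

theorem norm_integral_kernel_mul_le {φ g : ℝ → ℝ} {c x M : ℝ} (hφ : ∀ t, 0 ≤ φ t)
    (hφ1 : ∫ t, φ t = 1) (hc : 0 < c) (hg : ∀ s, ‖g s‖ ≤ M) :
    ‖∫ s, c * φ (c * (x - s)) * g s‖ ≤ M := by
  have hint : Integrable fun s ↦ c * φ (c * (x - s)) :=
    (((integrable_of_integral_eq_one hφ1).comp_mul_left' hc.ne').comp_sub_left x).const_mul c
  have hmass : ∫ s, c * φ (c * (x - s)) = 1 := by
    rw [MeasureTheory.integral_const_mul, integral_sub_left_eq_self (fun s ↦ φ (c * s)),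
      Measure.integral_comp_mul_left, hφ1, abs_inv, abs_of_pos hc, smul_eq_mul, mul_one,
      mul_inv_cancel₀ hc.ne']
  calc ‖∫ s, c * φ (c * (x - s)) * g s‖
      ≤ ∫ s, c * φ (c * (x - s)) * M := by
        refine norm_integral_le_of_norm_le (hint.mul_const M) (ae_of_all _ fun s ↦ ?_)
        rw [norm_mul, Real.norm_of_nonneg (mul_nonneg hc.le (hφ _))]
        exact mul_le_mul_of_nonneg_left (hg s) (mul_nonneg hc.le (hφ _))
    _ = M := by rw [MeasureTheory.integral_mul_const, hmass, one_mul]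

noncomputable def expKernel : ℝ → ℝ := (Ici 0).indicator fun t ↦ exp (-t)

theorem expKernel_nonneg (t : ℝ) : 0 ≤ expKernel t :=
  indicator_nonneg (fun _ _ ↦ (exp_pos _).le) t

theorem integral_expKernel : ∫ t, expKernel t = 1 := by
  rw [expKernel, MeasureTheory.integral_indicator measurableSet_Ici, integral_Ici_eq_integral_Ioi,
    integral_exp_neg_Ioi_zero]

theorem tendsto_norm_mul_expKernel_cobounded :
    Tendsto (fun t ↦ ‖t‖ * expKernel t) (cobounded ℝ) (𝓝 0) := by
  rw [Metric.cobounded_eq_cocompact, cocompact_eq_atBot_atTop, tendsto_sup]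
  constructor
  · refine tendsto_const_nhds.congr' ?_
    filter_upwards [eventually_lt_atBot 0] with t ht
    simp [expKernel, ht]
  · refine (tendsto_pow_mul_exp_neg_atTop_nhds_zero 1).congr' ?_
    filter_upwards [eventually_ge_atTop 0] with t ht
    simp [expKernel, ht, abs_of_nonneg ht]

theorem tendsto_integral_expKernel_mul {g : ℝ → ℝ} {x : ℝ} (hg : Integrable g)
    (hgx : ContinuousAt g x) :
    Tendsto (fun α ↦ ∫ s, α⁻¹ * expKernel (α⁻¹ * (x - s)) * g s) (𝓝[>] 0) (𝓝 (g x)) := by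
  have := tendsto_integral_comp_smul_smul_of_integrable' expKernel_nonneg integral_expKernel
    (by simpa using tendsto_norm_mul_expKernel_cobounded) hg hgx
  simpa [Function.comp_def] using this.comp tendsto_inv_nhdsGT_zero

theorem integral_expKernel_mul_indicator_eq {G : ℝ → ℝ} {α x : ℝ} (hα : 0 < α)
    (hx : x ∈ Icc (0:ℝ) 1) :
    ∫ s, α⁻¹ * expKernel (α⁻¹ * (x - s)) * (Icc 0 1).indicator G s
      = α⁻¹ * ∫ s in (0:ℝ)..x, exp ((s - x) / α) * G s := by
  have hpt : ∀ s, α⁻¹ * expKernel (α⁻¹ * (x - s)) * (Icc 0 1).indicator G s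
      = (Icc 0 x).indicator (fun s ↦ α⁻¹ * (exp ((s - x) / α) * G s)) s := by
    intro s
    by_cases hs : s ∈ Icc 0 x
    · have hkernel : expKernel (α⁻¹ * (x - s)) = exp ((s - x) / α) := by
        have : α⁻¹ * (x - s) ∈ Ici 0 := mul_nonneg (inv_nonneg.2 hα.le) (sub_nonneg.2 hs.2)
        rw [expKernel, indicator_of_mem this]
        congr 1; field_simp; ring
      have hs1 : s ∈ Icc (0:ℝ) 1 := ⟨hs.1, hs.2.trans hx.2⟩
      rw [indicator_of_mem hs, indicator_of_mem hs1, hkernel, mul_assoc]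
    · rw [indicator_of_notMem hs]
      rcases not_and_or.1 hs with hs0 | hsx
      · rw [indicator_of_notMem fun h ↦ hs0 h.1, mul_zero]
      · have : α⁻¹ * (x - s) ∉ Ici 0 := fun h ↦
          not_le.2 (mul_neg_of_pos_of_neg (inv_pos.2 hα) (sub_neg.2 (not_le.1 hsx))) h
        rw [expKernel, indicator_of_notMem this, mul_zero, zero_mul]
  simp only [hpt, MeasureTheory.integral_indicator measurableSet_Icc, integral_Icc_eq_integral_Ioc,
    ← intervalIntegral.integral_of_le hx.1, intervalIntegral.integral_const_mul]

noncomputable def regularizedSolution (f : ℝ → ℝ) (α x : ℝ) : ℝ :=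
  f x / α - α⁻¹ ^ 2 * exp (-x / α) * ∫ s in (0:ℝ)..x, exp (s / α) * f s

section RegularizedSolution

variable {f : ℝ → ℝ} {α x : ℝ}

theorem continuousOn_regularizedSolution (hf : ContinuousOn f (Icc 0 1)) (α : ℝ) :
    ContinuousOn (regularizedSolution f α) (Icc 0 1) := by
  have hint : IntegrableOn (fun s ↦ exp (s / α) * f s) (uIcc 0 1) :=
    (((by fun_prop : Continuous fun s ↦ exp (s / α)).continuousOn.mul hf).integrableOn_Icc).mono_set
      (by rw [uIcc_of_le zero_le_one])
  have hprim := intervalIntegral.continuousOn_primitive_interval hint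
  rw [uIcc_of_le zero_le_one] at hprim
  exact (hf.div_const α).sub ((by fun_prop : Continuous fun x ↦ α⁻¹ ^ 2 * exp (-x / α))
    |>.continuousOn.mul hprim)

theorem integral_exp_div_mul_eq_sub_integral
    (hf : ContDiffOn ℝ 1 f (Icc 0 1)) (hf0 : f 0 = 0) (hα : α ≠ 0) (hx : x ∈ Icc (0:ℝ) 1) :
    ∫ s in (0:ℝ)..x, exp (s / α) * f s
      = α * exp (x / α) * f x - α * ∫ s in (0:ℝ)..x, exp (s / α) * derivWithin f (Icc 0 1) s := by
  have hsub : uIcc (0:ℝ) x ⊆ Icc 0 1 := by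
    rw [uIcc_of_le hx.1]; exact Icc_subset_Icc le_rfl hx.2
  have hv : ∀ s, HasDerivAt (fun s ↦ α * exp (s / α)) (exp (s / α)) s := fun s ↦
    (((hasDerivAt_id s).div_const α).exp.const_mul α).congr_deriv (by field_simp; rfl)
  have hparts := integral_mul_deriv_eq_deriv_mul_of_hasDerivWithinAt
    (fun s hs ↦ ((hf.differentiableOn one_ne_zero s (hsub hs)).hasDerivWithinAt).mono hsub)
    (fun s _ ↦ (hv s).hasDerivWithinAt)
    ((hf.continuousOn_derivWithin (uniqueDiffOn_Icc one_pos) le_rfl).mono hsub).intervalIntegrable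
    ((by fun_prop : Continuous fun s ↦ exp (s / α)).intervalIntegrable 0 x)
  simp only [hf0, zero_mul, sub_zero] at hparts
  rw [← intervalIntegral.integral_const_mul]
  simp only [mul_comm (exp _), hparts, mul_left_comm α]
  ring

theorem regularizedSolution_eq_integral_exp_mul_derivWithin
    (hf : ContDiffOn ℝ 1 f (Icc 0 1)) (hf0 : f 0 = 0) (hα : α ≠ 0) (hx : x ∈ Icc (0:ℝ) 1) :
    regularizedSolution f α x
      = α⁻¹ * ∫ s in (0:ℝ)..x, exp ((s - x) / α) * derivWithin f (Icc 0 1) s := by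
  simp only [sub_div, exp_sub, div_mul_eq_mul_div, intervalIntegral.integral_div]
  rw [regularizedSolution, integral_exp_div_mul_eq_sub_integral hf hf0 hα hx, neg_div, exp_neg]
  field_simp
  ring

theorem regularizedSolution_eq_integral_expKernel_mul
    (hf : ContDiffOn ℝ 1 f (Icc 0 1)) (hf0 : f 0 = 0) (hα : 0 < α) (hx : x ∈ Icc (0:ℝ) 1) :
    regularizedSolution f α x
      = ∫ s, α⁻¹ * expKernel (α⁻¹ * (x - s)) * (Icc 0 1).indicator (derivWithin f (Icc 0 1)) s := by
  rw [integral_expKernel_mul_indicator_eq hα hx,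
    regularizedSolution_eq_integral_exp_mul_derivWithin hf hf0 hα.ne' hx]

theorem norm_regularizedSolution_le {M : ℝ} (hf : ContDiffOn ℝ 1 f (Icc 0 1)) (hf0 : f 0 = 0)
    (hM : ∀ s ∈ Icc (0:ℝ) 1, ‖derivWithin f (Icc 0 1) s‖ ≤ M) (hα : 0 < α)
    (hx : x ∈ Icc (0:ℝ) 1) :
    ‖regularizedSolution f α x‖ ≤ M := by
  rw [regularizedSolution_eq_integral_expKernel_mul hf hf0 hα hx]
  refine norm_integral_kernel_mul_le expKernel_nonneg integral_expKernel (inv_pos.2 hα) fun s ↦ ?_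
  by_cases hs : s ∈ Icc (0:ℝ) 1
  · rw [indicator_of_mem hs]; exact hM s hs
  · rw [indicator_of_notMem hs, norm_zero]; exact (norm_nonneg _).trans (hM 0 ⟨le_rfl, zero_le_one⟩)

theorem tendsto_regularizedSolution (hf : ContDiffOn ℝ 1 f (Icc 0 1)) (hf0 : f 0 = 0)
    (hx : x ∈ Ioo (0:ℝ) 1) :
    Tendsto (fun α ↦ regularizedSolution f α x) (𝓝[>] 0) (𝓝 (deriv f x)) := by
  set G := derivWithin f (Icc 0 1)
  have hGc : ContinuousOn G (Icc 0 1) :=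
    hf.continuousOn_derivWithin (uniqueDiffOn_Icc one_pos) le_rfl
  have hxI : Icc (0:ℝ) 1 ∈ 𝓝 x := Icc_mem_nhds hx.1 hx.2
  have hGx : (Icc 0 1).indicator G =ᶠ[𝓝 x] G :=
    eventuallyEq_of_mem hxI fun y hy ↦ indicator_of_mem hy G
  have hlim := tendsto_integral_expKernel_mul
    ((integrable_indicator_iff measurableSet_Icc).2 hGc.integrableOn_Icc)
    ((hGc.continuousAt hxI).congr hGx.symm)
  rw [hGx.eq_of_nhds, show G x = deriv f x from derivWithin_of_mem_nhds hxI] at hlim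
  refine hlim.congr' ?_
  filter_upwards [self_mem_nhdsWithin] with α hα
  exact (regularizedSolution_eq_integral_expKernel_mul hf hf0 hα (Ioo_subset_Icc_self hx)).symm

end RegularizedSolution

/-- If `f ∈ C¹([0,1])` with `f(0) = 0` and `u = f′`, then the regularized
solutions `u_α = (αI + A)⁻¹ f` (given by the explicit solution formula)
converge to `u` in `L²(0,1)` as `α → 0⁺`. -/
theorem regularized_solutions_converge
    (f : ℝ → ℝ) (hf : ContDiffOn ℝ 1 f (Set.Icc 0 1)) (hf0 : f 0 = 0) :
    Tendsto (fun α : ℝ =>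
        eLpNorm (fun x =>
            (f x / α - α⁻¹ ^ 2 * exp (-x / α) * ∫ s in (0:ℝ)..x, exp (s / α) * f s)
              - deriv f x) 2 (volume.restrict (Set.Ioc 0 1)))
      (nhdsWithin 0 (Set.Ioi 0)) (nhds 0) := by
  change Tendsto (fun α ↦ eLpNorm (fun x ↦ regularizedSolution f α x - deriv f x) 2 _) _ _
  obtain ⟨M, hM⟩ := isCompact_Icc.exists_bound_of_continuousOn
    (hf.continuousOn_derivWithin (uniqueDiffOn_Icc one_pos) le_rfl)
  have h_ae : ∀ᵐ x ∂volume.restrict (Ioc (0:ℝ) 1), x ∈ Ioo 0 1 := by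
    rw [← Measure.restrict_congr_set Ioo_ae_eq_Ioc]
    exact ae_restrict_mem measurableSet_Ioo
  refine tendsto_eLpNorm_zero_of_dominated (C := M + M) ENNReal.ofNat_ne_top ?_ ?_ ?_
  · refine Eventually.of_forall fun α ↦ AEStronglyMeasurable.sub ?_
      (measurable_deriv f).aestronglyMeasurable
    exact ((continuousOn_regularizedSolution hf.continuousOn α).mono Ioc_subset_Icc_self)
      |>.aestronglyMeasurable measurableSet_Ioc
  · filter_upwards [self_mem_nhdsWithin] with α hα
    filter_upwards [h_ae] with x hx
    rw [← derivWithin_of_mem_nhds (Icc_mem_nhds hx.1 hx.2)]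
    exact (norm_sub_le _ _).trans (add_le_add
      (norm_regularizedSolution_le hf hf0 hM hα (Ioo_subset_Icc_self hx))
      (hM x (Ioo_subset_Icc_self hx)))
  · filter_upwards [h_ae] with x hx
    simpa using (tendsto_regularizedSolution hf hf0 hx).sub_const (deriv f x)
end

section
/- Monotonicity of the discrepancy: for a bounded linear operator A on a Hilbert space, f ∈ H, and u_a := (A*A + aI)⁻¹ A* f, the discrepancy function a ↦ ‖A u_a − f‖ is nondecreasing in a > 0. -/
/-!
The normal equation `(A*A + a) u_a = A* f` says that `u_a` minimizes the Tikhonov functional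
`‖A v − f‖² + a‖v‖²`. Comparing the minimality of `u_a` for `a` and of `u_b` for `b > a` forces
`‖u_b‖ ≤ ‖u_a‖`, and then the minimality of `u_a` gives `‖A u_a − f‖² ≤ ‖A u_b − f‖²`.
-/

open ContinuousLinearMap

lemma discrepancy_le_of_penalized_le {α : Type*} (D P : α → ℝ) {a b : ℝ} {x y : α}
    (ha : 0 ≤ a) (hab : a < b) (hx : D x + a * P x ≤ D y + a * P y)
    (hy : D y + b * P y ≤ D x + b * P x) : D x ≤ D y := by
  have hP : P y ≤ P x := le_of_mul_le_mul_left (by linarith) (sub_pos.2 hab)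
  nlinarith [mul_le_mul_of_nonneg_left hP ha]

section Tikhonov

variable {𝕜 E F : Type*} [RCLike 𝕜] [NormedAddCommGroup E] [InnerProductSpace 𝕜 E]
  [CompleteSpace E] [NormedAddCommGroup F] [InnerProductSpace 𝕜 F] [CompleteSpace F]

lemma tikhonov_orthogonality (A : E →L[𝕜] F) (f : F) {a : ℝ} {u : E}
    (hu : (adjoint A ∘L A + (a : 𝕜) • 1) u = adjoint A f) (w : E) :
    RCLike.re (inner 𝕜 (A w) (A u - f)) + a * RCLike.re (inner 𝕜 w u) = 0 := by
  have hnormal : adjoint A (A u - f) + (a : 𝕜) • u = 0 := by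
    rw [map_sub, ← hu]
    simp
  have h : inner 𝕜 (A w) (A u - f) + (a : 𝕜) * inner 𝕜 w u = 0 := by
    rw [← adjoint_inner_right, ← inner_smul_right, ← inner_add_right, hnormal, inner_zero_right]
  simpa [RCLike.re_ofReal_mul] using congrArg RCLike.re h

lemma tikhonov_minimizes (A : E →L[𝕜] F) (f : F) {a : ℝ} (ha : 0 ≤ a) {u : E}
    (hu : (adjoint A ∘L A + (a : 𝕜) • 1) u = adjoint A f) (v : E) :
    ‖A u - f‖ ^ 2 + a * ‖u‖ ^ 2 ≤ ‖A v - f‖ ^ 2 + a * ‖v‖ ^ 2 := by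
  set w := v - u
  have hcross := tikhonov_orthogonality A f hu w
  have hAv : ‖A v - f‖ ^ 2 =
      ‖A w‖ ^ 2 + 2 * RCLike.re (inner 𝕜 (A w) (A u - f)) + ‖A u - f‖ ^ 2 := by
    rw [← norm_add_sq, map_sub, sub_add_sub_cancel]
  have hv : ‖v‖ ^ 2 = ‖w‖ ^ 2 + 2 * RCLike.re (inner 𝕜 w u) + ‖u‖ ^ 2 := by
    rw [← norm_add_sq, sub_add_cancel]
  rw [hAv, hv]
  linarith [sq_nonneg ‖A w‖, mul_nonneg ha (sq_nonneg ‖w‖)]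

end Tikhonov

/-- Monotonicity of the discrepancy: for a bounded linear operator `A` on a
Hilbert space, `f ∈ H`, and `u_a = (A*A + aI)⁻¹ A* f`, the discrepancy
`a ↦ ‖A u_a − f‖` is nondecreasing in `a > 0`. -/
theorem discrepancy_monotone {H : Type*} [NormedAddCommGroup H]
    [InnerProductSpace ℂ H] [CompleteSpace H] (A : H →L[ℂ] H) (f : H)
    (u : ℝ → H)
    (hu : ∀ a : ℝ, 0 < a → (adjoint A ∘L A + (a : ℂ) • 1) (u a) = adjoint A f) :
    ∀ a b : ℝ, 0 < a → a ≤ b → ‖A (u a) - f‖ ≤ ‖A (u b) - f‖ := by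
  intro a b ha hab
  rcases hab.eq_or_lt with rfl | hlt
  · rfl
  have hb : 0 < b := ha.trans hlt
  have hsq : ‖A (u a) - f‖ ^ 2 ≤ ‖A (u b) - f‖ ^ 2 :=
    discrepancy_le_of_penalized_le (fun v => ‖A v - f‖ ^ 2) (fun v => ‖v‖ ^ 2) ha.le hlt
      (tikhonov_minimizes A f ha.le (hu a ha) (u b))
      (tikhonov_minimizes A f hb.le (hu b hb) (u a))
  exact (pow_le_pow_iff_left₀ (norm_nonneg _) (norm_nonneg _) two_ne_zero).1 hsq
end
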